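/- Let λ > 0 and μ ≥ 0, and let ρ : ℝ → ℝ be μ-amenable. Define q(t) := λ|t| − ρ(t). Then q is differentiable at every point of ℝ with q'(0) = 0, and the function t ↦ q(t) − (μ/2)t² is concave on ℝ. -/

import Mathlib

/-!
Put `φ t = ρ t + μ/2 t²`, which is convex and even, so that `q t - μ/2 t² = λ|t| - φ t`.
Off the origin this function has derivative `G t = λ sign t - φ'(t)`. Since `φ` is even, `G` is
odd, and `G t → λ - λ = 0` as `t → 0⁺`; hence `G` is continuous at `0` and, by the
derivative-limit theorem, it is the derivative everywhere, with `G 0 = 0`. Convexity makes `φ'`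
nondecreasing on `(0, ∞)`, hence `φ' ≥ λ` there, so `G` is nonpositive and nonincreasing on
`[0, ∞)`; being odd, `G` is nonincreasing on all of `ℝ`, which is concavity.
-/

/-- A function `ρ : ℝ → ℝ` is `μ`-amenable (with selection parameter `lam > 0`):
(i) symmetric around zero with `ρ 0 = 0`; (ii) nondecreasing on `[0, ∞)`;
(iii) `t ↦ ρ t / t` nonincreasing on `(0, ∞)`; (iv) differentiable away from `0`;
(v) `t ↦ ρ t + μ/2 t²` convex; (vi) `ρ'(t) → lam` as `t → 0⁺`. -/
structure Amenable (lam mu : ℝ) (ρ : ℝ → ℝ) : Prop where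
  symm : ∀ t : ℝ, ρ (-t) = ρ t
  zero : ρ 0 = 0
  mono : MonotoneOn ρ (Set.Ici (0 : ℝ))
  ratio : AntitoneOn (fun t => ρ t / t) (Set.Ioi (0 : ℝ))
  diff : ∀ t : ℝ, t ≠ 0 → DifferentiableAt ℝ ρ t
  conv : ConvexOn ℝ Set.univ (fun t => ρ t + mu / 2 * t ^ 2)
  deriv_lim : Filter.Tendsto (deriv ρ) (nhdsWithin 0 (Set.Ioi 0)) (nhds lam)

open Filter Set Topology

theorem Function.Even.deriv {𝕜 F : Type*} [NontriviallyNormedField 𝕜] [NormedAddCommGroup F]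
    [NormedSpace 𝕜 F] {f : 𝕜 → F} (hf : f.Even) : (deriv f).Odd := fun x => by
  simpa [funext hf] using deriv_comp_neg f (-x)

theorem Function.Odd.antitone_of_antitoneOn_Ici {α β : Type*} [AddCommGroup α] [LinearOrder α]
    [IsOrderedAddMonoid α] [AddCommGroup β] [PartialOrder β] [IsOrderedAddMonoid β] {f : α → β}
    (hodd : f.Odd) (hf : AntitoneOn f (Ici 0)) : Antitone f := by
  refine AntitoneOn.Iic_union_Ici (fun a ha b hb hab => ?_) hf
  have := hf (neg_nonneg.2 hb) (neg_nonneg.2 ha) (neg_le_neg hab)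
  rw [hodd, hodd] at this
  exact neg_le_neg_iff.1 this

theorem Function.Odd.continuousAt_zero {α E : Type*} [AddCommGroup α] [LinearOrder α]
    [IsOrderedAddMonoid α] [TopologicalSpace α] [OrderTopology α] [ContinuousNeg α]
    [TopologicalSpace E] [AddGroup E] [ContinuousNeg E] {f : α → E} (hodd : f.Odd)
    (h : Tendsto f (𝓝[>] 0) (𝓝 (f 0))) : ContinuousAt f 0 := by
  refine continuousAt_iff_continuous_left'_right'.2 ⟨?_, h⟩
  have hleft := (h.comp (tendsto_neg_nhdsLT_neg (a := (0 : α)))).neg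
  rw [neg_zero] at hleft
  show Tendsto f (𝓝[<] 0) (𝓝 (f 0))
  simpa [Function.comp_def, hodd _, ← hodd 0] using hleft

theorem MonotoneOn.le_of_tendsto_nhdsGT {β : Type*} [TopologicalSpace β] [Preorder β]
    [ClosedIicTopology β] {f : ℝ → β} {a x : ℝ} {l : β} (hf : MonotoneOn f (Ioi a))
    (hlim : Tendsto f (𝓝[>] a) (𝓝 l)) (hx : a < x) : l ≤ f x := by
  refine le_of_tendsto hlim ?_
  filter_upwards [Ioo_mem_nhdsGT hx] with s hs
  exact hf hs.1 (mem_Ioi.2 hx) hs.2.le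

section MulAbsSub

variable {lam : ℝ} {φ : ℝ → ℝ}

theorem odd_mul_sign_sub_deriv (heven : φ.Even) :
    Function.Odd fun t : ℝ => lam * SignType.sign t - deriv φ t := fun t => by
  simp only [Left.sign_neg, SignType.coe_neg, heven.deriv t]
  ring

theorem hasDerivAt_mul_abs_sub (heven : φ.Even) (hcont : ContinuousAt φ 0)
    (hdiff : ∀ t ≠ 0, DifferentiableAt ℝ φ t) (hlim : Tendsto (deriv φ) (𝓝[>] 0) (𝓝 lam))
    (t : ℝ) :
    HasDerivAt (fun t => lam * |t| - φ t) (lam * SignType.sign t - deriv φ t) t := by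
  have hright : Tendsto (fun t : ℝ => lam * SignType.sign t - deriv φ t) (𝓝[>] 0)
      (𝓝 (lam * SignType.sign (0 : ℝ) - deriv φ 0)) := by
    rw [show lam * SignType.sign (0 : ℝ) - deriv φ 0 = lam - lam by simp [heven.deriv.map_zero]]
    refine (tendsto_const_nhds.sub hlim).congr' ?_
    filter_upwards [self_mem_nhdsWithin] with s hs
    rw [sign_pos hs, SignType.coe_one, mul_one]
  refine hasDerivAt_of_hasDerivAt_of_ne' (fun s hs => ?_) (by fun_prop)
    ((odd_mul_sign_sub_deriv heven).continuousAt_zero hright) t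
  exact ((hasDerivAt_abs hs).const_mul lam).sub (hdiff s hs).hasDerivAt

theorem concaveOn_mul_abs_sub (hconv : ConvexOn ℝ univ φ) (heven : φ.Even)
    (hdiff : ∀ t ≠ 0, DifferentiableAt ℝ φ t) (hlim : Tendsto (deriv φ) (𝓝[>] 0) (𝓝 lam)) :
    ConcaveOn ℝ univ (fun t => lam * |t| - φ t) := by
  have hderiv := hasDerivAt_mul_abs_sub heven
    ((hconv.continuousOn isOpen_univ).continuousAt univ_mem) hdiff hlim
  have hmono : MonotoneOn (deriv φ) (Ioi 0) :=
    (hconv.subset (subset_univ _) (convex_Ioi 0)).monotoneOn_deriv fun t ht => hdiff t ht.ne'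
  have hlam_le : ∀ t, 0 < t → lam ≤ deriv φ t := fun t => hmono.le_of_tendsto_nhdsGT hlim
  refine Antitone.concaveOn_univ_of_deriv (fun t => (hderiv t).differentiableAt) ?_
  rw [show deriv (fun t => lam * |t| - φ t) = fun t => lam * SignType.sign t - deriv φ t from
    funext fun t => (hderiv t).deriv]
  refine (odd_mul_sign_sub_deriv heven).antitone_of_antitoneOn_Ici fun a ha b hb hab => ?_
  rcases (mem_Ici.1 ha).eq_or_lt with rfl | ha
  · rcases (mem_Ici.1 hb).eq_or_lt with rfl | hb
    · exact le_rfl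
    · simp [sign_pos hb, heven.deriv.map_zero, hlam_le b hb]
  · simp only [sign_pos ha, sign_pos (ha.trans_le hab), SignType.coe_one, mul_one]
    linarith [hmono ha (ha.trans_le hab) hab]

end MulAbsSub

namespace Amenable

variable {lam mu : ℝ} {ρ : ℝ → ℝ}

theorem even_add_sq (h : Amenable lam mu ρ) : Function.Even fun t => ρ t + mu / 2 * t ^ 2 :=
  fun t => by simp [h.symm t]

theorem differentiableAt_add_sq (h : Amenable lam mu ρ) {t : ℝ} (ht : t ≠ 0) :
    DifferentiableAt ℝ (fun t => ρ t + mu / 2 * t ^ 2) t :=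
  (h.diff t ht).add (by fun_prop)

theorem tendsto_deriv_add_sq (h : Amenable lam mu ρ) :
    Tendsto (deriv fun t => ρ t + mu / 2 * t ^ 2) (𝓝[>] 0) (𝓝 lam) := by
  have hlim : Tendsto (fun t => deriv ρ t + mu * t) (𝓝[>] 0) (𝓝 (lam + mu * 0)) :=
    h.deriv_lim.add ((continuous_const.mul continuous_id).tendsto 0 |>.mono_left
      nhdsWithin_le_nhds)
  rw [mul_zero, add_zero] at hlim
  refine hlim.congr' ?_
  filter_upwards [self_mem_nhdsWithin] with t ht
  rw [((h.diff t ht.ne').hasDerivAt.fun_add ((hasDerivAt_pow 2 t).const_mul (mu / 2))).deriv]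
  ring

end Amenable

theorem q_lambda_differentiable_concave (lam mu : ℝ)
    (ρ : ℝ → ℝ) (h : Amenable lam mu ρ) :
    (∀ t : ℝ, DifferentiableAt ℝ (fun t => lam * |t| - ρ t) t) ∧
    deriv (fun t => lam * |t| - ρ t) 0 = 0 ∧
    ConcaveOn ℝ Set.univ (fun t => (lam * |t| - ρ t) - mu / 2 * t ^ 2) := by
  have hderiv := hasDerivAt_mul_abs_sub h.even_add_sq
    ((h.conv.continuousOn isOpen_univ).continuousAt univ_mem)
    (fun _ => h.differentiableAt_add_sq) h.tendsto_deriv_add_sq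
  have hq : (fun t => lam * |t| - ρ t) =
      fun t => (lam * |t| - (ρ t + mu / 2 * t ^ 2)) + mu / 2 * t ^ 2 := by
    funext t; ring
  refine ⟨fun t => ?_, ?_, ?_⟩
  · rw [hq]
    exact (hderiv t).differentiableAt.add (by fun_prop)
  · rw [hq, ((hderiv 0).fun_add ((hasDerivAt_pow 2 0).const_mul (mu / 2))).deriv]
    simp [h.even_add_sq.deriv.map_zero]
  · convert concaveOn_mul_abs_sub h.conv h.even_add_sq (fun _ => h.differentiableAt_add_sq)
      h.tendsto_deriv_add_sq using 1
    funext t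
    ring
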